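/- (Theorem 8, mathematical content) For any two functions f, g : 𝔽₂ⁿ → {1,-1} and any u ∈ 𝔽₂ⁿ, letting L_u : 𝔽₂ⁿ → {1,-1} be the linear function L_u(x) = (-1)^{u·x}, the 3-fold Forrelation satisfies Φ_{f, L_u, g} = C_{f,g}(u) / 2ⁿ. -/

import Mathlib

open Finset

/-- The sign character `(-1)^(x·y)` where `x·y = Σᵢ xᵢyᵢ` in `𝔽₂`. -/
noncomputable def chi {n : ℕ} (x y : Fin n → ZMod 2) : ℝ :=
  (-1 : ℝ) ^ (∑ i, x i * y i).val

/-- A function takes values in `{1, -1}`. -/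
noncomputable def IsPM {n : ℕ} (f : (Fin n → ZMod 2) → ℝ) : Prop :=
  ∀ x, f x = 1 ∨ f x = -1

/-- The Walsh transform `W_f(ω) = Σ_x f(x)·(-1)^(x·ω)`. -/
noncomputable def walsh {n : ℕ} (f : (Fin n → ZMod 2) → ℝ) (ω : Fin n → ZMod 2) : ℝ :=
  ∑ x, f x * chi x ω

/-- The 2-fold Forrelation `Φ_{f,g} = 2^{-3n/2} Σ_x f(x) W_g(x)`. -/
noncomputable def forr2 {n : ℕ} (f g : (Fin n → ZMod 2) → ℝ) : ℝ :=
  (2 : ℝ) ^ (-(3 * (n : ℝ)) / 2) * ∑ x, f x * walsh g x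

/-- The 3-fold Forrelation. -/
noncomputable def forr3 {n : ℕ} (f₁ f₂ f₃ : (Fin n → ZMod 2) → ℝ) : ℝ :=
  (1 / (2 : ℝ) ^ (2 * n)) *
    ∑ x₁, ∑ x₂, ∑ x₃, f₁ x₁ * chi x₁ x₂ * f₂ x₂ * chi x₂ x₃ * f₃ x₃

/-- The cross-correlation `C_{f,g}(y) = Σ_x f(x)·g(x ⊕ y)`. -/
noncomputable def crossCorr {n : ℕ} (f g : (Fin n → ZMod 2) → ℝ) (y : Fin n → ZMod 2) : ℝ :=
  ∑ x, f x * g (x + y)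

lemma neg_one_pow_val_add (a b : ZMod 2) :
    (-1:ℝ)^(a+b).val = (-1:ℝ)^a.val * (-1:ℝ)^b.val := by
  rcases (show ∀ c : ZMod 2, c = 0 ∨ c = 1 by decide) a with rfl | rfl <;>
    rcases (show ∀ c : ZMod 2, c = 0 ∨ c = 1 by decide) b with rfl | rfl <;>
    norm_num [show ZMod.val (2:ZMod 2) = 0 from rfl, show ZMod.val (1:ZMod 2) = 1 from rfl,
      show ZMod.val (0:ZMod 2) = 0 from rfl]

lemma neg_one_pow_val_sum {ι : Type*} (s : Finset ι) (c : ι → ZMod 2) :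
    (-1:ℝ)^((∑ i ∈ s, c i).val) = ∏ i ∈ s, (-1:ℝ)^(c i).val := by
  induction s using Finset.cons_induction with
  | empty => simp
  | cons i s hi ih => rw [Finset.sum_cons, Finset.prod_cons, neg_one_pow_val_add, ih]

lemma chi_comm {n : ℕ} (x y : Fin n → ZMod 2) : chi x y = chi y x := by
  unfold chi
  congr 2
  exact Finset.sum_congr rfl fun i _ => mul_comm _ _

lemma chi_add_left {n : ℕ} (a b y : Fin n → ZMod 2) :
    chi (a+b) y = chi a y * chi b y := by
  unfold chi
  rw [← neg_one_pow_val_add]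
  congr 2
  rw [← Finset.sum_add_distrib]
  exact Finset.sum_congr rfl fun i _ => by simp [add_mul]

lemma innerSumChi (c : ZMod 2) :
    ∑ b : ZMod 2, (-1:ℝ)^((c*b).val) = if c = 0 then 2 else 0 := by
  have : (Finset.univ : Finset (ZMod 2)) = {0, 1} := by decide
  rcases (show ∀ c : ZMod 2, c = 0 ∨ c = 1 by decide) c with rfl | rfl <;>
    simp [this, Finset.sum_pair, ZMod.val_one]

lemma sum_chi {n : ℕ} (a : Fin n → ZMod 2) :
    ∑ y, chi a y = if a = 0 then (2:ℝ)^n else 0 := by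
  have h1 : ∀ y : Fin n → ZMod 2, chi a y = ∏ i, (-1:ℝ)^((a i * y i).val) :=
    fun y => neg_one_pow_val_sum _ _
  calc ∑ y, chi a y = ∑ y : Fin n → ZMod 2, ∏ i, (-1:ℝ)^((a i * y i).val) := by
        exact Finset.sum_congr rfl fun y _ => h1 y
    _ = ∏ i, ∑ b : ZMod 2, (-1:ℝ)^((a i * b).val) := by
        rw [Finset.prod_univ_sum]
        simp [Fintype.piFinset_univ]
    _ = ∏ i, (if a i = 0 then (2:ℝ) else 0) := Finset.prod_congr rfl fun i _ => innerSumChi (a i)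
    _ = if a = 0 then (2:ℝ)^n else 0 := by
        by_cases h : a = 0
        · simp [h]
        · obtain ⟨i, hi⟩ := Function.ne_iff.mp h
          rw [if_neg h]
          exact Finset.prod_eq_zero (mem_univ i) (by simpa using hi)

theorem forr3_linear_crossCorr {n : ℕ} (f g : (Fin n → ZMod 2) → ℝ)
    (hf : IsPM f) (hg : IsPM g) (u : Fin n → ZMod 2) :
    forr3 f (fun x => chi u x) g = crossCorr f g u / (2 : ℝ) ^ n := by
  have hdd : ∀ x : ZMod 2, x + x = 0 := by decide
  have hvv : ∀ v : Fin n → ZMod 2, v + v = 0 := fun v => funext fun i => hdd (v i)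
  have hcond : ∀ x₁ x₃ : Fin n → ZMod 2, (x₁ + u + x₃ = 0) ↔ (x₃ = x₁ + u) := by
    intro x₁ x₃
    constructor
    · intro h
      have : x₁ + u = x₃ := by
        calc x₁ + u = (x₁ + u + x₃) + x₃ := by rw [add_assoc, hvv x₃, add_zero]
          _ = x₃ := by rw [h, zero_add]
      exact this.symm
    · intro h
      subst h
      exact hvv _
  have key : ∀ x₁ : Fin n → ZMod 2,
      (∑ x₂, ∑ x₃, f x₁ * chi x₁ x₂ * chi u x₂ * chi x₂ x₃ * g x₃)
        = (2:ℝ)^n * (f x₁ * g (x₁ + u)) := by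
    intro x₁
    rw [Finset.sum_comm]
    have inner : ∀ x₃ : Fin n → ZMod 2,
        (∑ x₂, f x₁ * chi x₁ x₂ * chi u x₂ * chi x₂ x₃ * g x₃)
          = f x₁ * g x₃ * (if x₁ + u + x₃ = 0 then (2:ℝ)^n else 0) := by
      intro x₃
      rw [← sum_chi, Finset.mul_sum]
      refine Finset.sum_congr rfl fun x₂ _ => ?_
      rw [chi_add_left, chi_add_left, chi_comm x₃ x₂]
      ring
    rw [Finset.sum_congr rfl fun x₃ _ => inner x₃]
    rw [Finset.sum_eq_single (x₁ + u)]
    · rw [if_pos ((hcond x₁ (x₁+u)).mpr rfl)]; ring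
    · intro b _ hb
      rw [if_neg (fun h => hb ((hcond x₁ b).mp h))]; ring
    · intro h; exact absurd (mem_univ _) h
  unfold forr3 crossCorr
  simp only []
  have hsum : (∑ x₁, ∑ x₂, ∑ x₃, f x₁ * chi x₁ x₂ * chi u x₂ * chi x₂ x₃ * g x₃)
      = (2:ℝ)^n * ∑ x, f x * g (x + u) := by
    rw [Finset.mul_sum]
    exact Finset.sum_congr rfl fun x₁ _ => key x₁
  rw [hsum]
  have h2n : (2:ℝ)^(2*n) = (2:ℝ)^n * (2:ℝ)^n := by rw [two_mul, pow_add]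
  rw [h2n]
  have hne : (2:ℝ)^n ≠ 0 := by positivity
  field_simp
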